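/- Let S be a Steiner system S(5,8,24) on a 24-element set Ω, let ∞, 0, 1 ∈ Ω be distinct points, let K₀ ∈ S be an octad with 0 ∈ K₀ and ∞ ∉ K₀, 1 ∉ K₀, and let F = {K ∈ S : ∞ ∈ K, 0 ∈ K, 1 ∉ K, |K ∩ K₀| = 4}. Then every point k ∈ K₀ with k ≠ 0 lies in exactly 12 of the members of F. -/

import Mathlib

/-!
Double counting with λ₅ = 1 gives λ₄ = 5 and λ₃ = 21 octads through a 4-set and a 3-set. Counting
the 3- and 4-subsets of an octad that lie on other octads then shows that distinct octads meet in
at most 4 points and never in exactly 3; so an octad through `∞` containing three points of `K₀`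
meets `K₀` in exactly four. Double counting incidences with the six points of `K₀ \ {0, k}`, there
are `6 · 5 / 2 = 15` octads through `∞, 0, k` meeting `K₀` in four points, and `6 · 1 / 2 = 3` of
them also pass through `1`; the other 12 are the members of `F` containing `k`.
-/

/-- A Steiner system `S(5,8,24)`: `Ω` has 24 elements, every block (octad) has 8
elements, and every 5-element subset of `Ω` is contained in exactly one octad. -/
def IsSteinerSystem_5_8_24 {Ω : Type*} [Fintype Ω] [DecidableEq Ω]
    (S : Finset (Finset Ω)) : Prop :=
  Fintype.card Ω = 24 ∧
  (∀ K ∈ S, K.card = 8) ∧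
  ∀ A : Finset Ω, A.card = 5 → ∃! K, K ∈ S ∧ A ⊆ K

open Finset

section

variable {Ω : Type*} [DecidableEq Ω] {S : Finset (Finset Ω)}

theorem card_filter_superset_mul [Fintype Ω] {k m : ℕ} (hk : ∀ K ∈ S, #K = k) {A : Finset Ω}
    (hA : ∀ x ∉ A, #{K ∈ S | insert x A ⊆ K} = m) :
    #{K ∈ S | A ⊆ K} * (k - #A) = (Fintype.card Ω - #A) * m := by
  rw [← card_compl]
  refine card_mul_eq_card_mul (fun K x => x ∈ K) (fun K hK => ?_) (fun x hx => ?_)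
  · rw [mem_filter] at hK
    have : Aᶜ.bipartiteAbove (fun K x => x ∈ K) K = K \ A := by
      ext x; simp [bipartiteAbove, and_comm]
    rw [this, card_sdiff_of_subset hK.2, hk K hK.1]
  · rw [mem_compl] at hx
    rw [← hA x hx, bipartiteBelow, filter_filter]
    simp_rw [insert_subset_iff, and_comm]

theorem sum_choose_card_inter {K₀ : Finset Ω} (hK₀ : K₀ ∈ S) {j m : ℕ}
    (hm : ∀ A : Finset Ω, #A = j → #{K ∈ S | A ⊆ K} = m) :
    ∑ K ∈ S.erase K₀, (#(K ∩ K₀)).choose j = (#K₀).choose j * (m - 1) := by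
  have above : ∀ A ∈ K₀.powersetCard j,
      #((S.erase K₀).bipartiteAbove (fun A K => A ⊆ K) A) = m - 1 := by
    intro A hA
    rw [mem_powersetCard] at hA
    rw [bipartiteAbove, filter_erase, card_erase_of_mem (mem_filter.2 ⟨hK₀, hA.1⟩), hm A hA.2]
  have below : ∀ K ∈ S.erase K₀,
      #((K₀.powersetCard j).bipartiteBelow (fun A K => A ⊆ K) K) = (#(K ∩ K₀)).choose j := by
    intro K _
    have : (K₀.powersetCard j).bipartiteBelow (fun A K => A ⊆ K) K = (K ∩ K₀).powersetCard j := by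
      ext A; simp only [bipartiteBelow, mem_filter, mem_powersetCard, subset_inter_iff]; tauto
    rw [this, card_powersetCard]
  rw [← sum_congr rfl below, ← sum_card_bipartiteAbove_eq_sum_card_bipartiteBelow,
    sum_congr rfl above, sum_const, card_powersetCard, smul_eq_mul]

namespace IsSteinerSystem_5_8_24

variable [Fintype Ω]

theorem card_filter_superset_of_card_eq_five (hS : IsSteinerSystem_5_8_24 S)
    {A : Finset Ω} (hA : #A = 5) :
    #{K ∈ S | A ⊆ K} = 1 := by
  obtain ⟨K, hK, huniq⟩ := hS.2.2 A hA
  exact card_eq_one.2 ⟨K, eq_singleton_iff_unique_mem.2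
    ⟨mem_filter.2 hK, fun L hL => huniq L (mem_filter.1 hL)⟩⟩

theorem card_filter_superset_of_card_eq_four (hS : IsSteinerSystem_5_8_24 S)
    {A : Finset Ω} (hA : #A = 4) :
    #{K ∈ S | A ⊆ K} = 5 := by
  have := card_filter_superset_mul hS.2.1 (A := A) fun x hx =>
    hS.card_filter_superset_of_card_eq_five (by rw [card_insert_of_notMem hx, hA])
  rw [hS.1, hA] at this
  omega

theorem card_filter_superset_of_card_eq_three (hS : IsSteinerSystem_5_8_24 S)
    {A : Finset Ω} (hA : #A = 3) :
    #{K ∈ S | A ⊆ K} = 21 := by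
  have := card_filter_superset_mul hS.2.1 (A := A) fun x hx =>
    hS.card_filter_superset_of_card_eq_four (by rw [card_insert_of_notMem hx, hA])
  rw [hS.1, hA] at this
  omega

theorem card_inter_le_four (hS : IsSteinerSystem_5_8_24 S) {K L : Finset Ω} (hK : K ∈ S)
    (hL : L ∈ S) (hKL : K ≠ L) : #(K ∩ L) ≤ 4 := by
  by_contra! h
  obtain ⟨A, hAKL, hA⟩ := exists_subset_card_eq (show 5 ≤ #(K ∩ L) by omega)
  obtain ⟨M, -, huniq⟩ := hS.2.2 A hA
  exact hKL <| (huniq K ⟨hK, hAKL.trans inter_subset_left⟩).trans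
    (huniq L ⟨hL, hAKL.trans inter_subset_right⟩).symm

/-- Counting the 3- and 4-subsets of `L` covered by the other octads gives
`∑ C(c,3) = 56 · 20 = 4 · (70 · 4) = 4 · ∑ C(c,4)` over the intersection sizes `c ≤ 4`,
while `C(c,3) = 4 C(c,4)` for every `c ≤ 4` except `c = 3`. -/
theorem card_inter_ne_three (hS : IsSteinerSystem_5_8_24 S) {K L : Finset Ω} (hK : K ∈ S)
    (hL : L ∈ S) (hKL : K ≠ L) : #(K ∩ L) ≠ 3 := by
  have sum3 := sum_choose_card_inter hL fun _ => hS.card_filter_superset_of_card_eq_three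
  have sum4 := sum_choose_card_inter hL fun _ => hS.card_filter_superset_of_card_eq_four
  rw [hS.2.1 L hL] at sum3 sum4
  have choose_three : ∀ M ∈ S.erase L, (#(M ∩ L)).choose 3
      = 4 * (#(M ∩ L)).choose 4 + if #(M ∩ L) = 3 then 1 else 0 := by
    intro M hM
    obtain ⟨hML, hM⟩ := mem_erase.1 hM
    have := hS.card_inter_le_four hM hL hML
    interval_cases #(M ∩ L) <;> rfl
  rw [sum_congr rfl choose_three, sum_add_distrib, ← mul_sum, sum4, sum_boole] at sum3
  have no_three : #{M ∈ S.erase L | #(M ∩ L) = 3} = 0 := by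
    rw [show (8 : ℕ).choose 3 = 56 by rfl, show (8 : ℕ).choose 4 = 70 by rfl, Nat.cast_id] at sum3
    omega
  exact fun h => card_ne_zero_of_mem (mem_filter.2 ⟨mem_erase.2 ⟨hKL, hK⟩, h⟩) no_three

theorem card_inter_eq_four_of_three_le (hS : IsSteinerSystem_5_8_24 S) {K L : Finset Ω}
    (hK : K ∈ S) (hL : L ∈ S) (hKL : K ≠ L) (h : 3 ≤ #(K ∩ L)) : #(K ∩ L) = 4 := by
  have := hS.card_inter_le_four hK hL hKL
  have := hS.card_inter_ne_three hK hL hKL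
  omega

/-- Each such octad contains two of the six points of `K₀ \ A`, and for `x ∈ K₀ \ A` every octad
through `insert x A` meets `K₀` in at least three, hence four, points. -/
theorem card_filter_superset_inter_eq_four_mul_two (hS : IsSteinerSystem_5_8_24 S)
    {K₀ A : Finset Ω} (hK₀ : K₀ ∈ S) (hAK₀ : ¬A ⊆ K₀) (hA : #(A ∩ K₀) = 2) {m : ℕ}
    (hm : ∀ B : Finset Ω, #B = #A + 1 → #{K ∈ S | B ⊆ K} = m) :
    #{K ∈ S | A ⊆ K ∧ #(K ∩ K₀) = 4} * 2 = 6 * m := by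
  have card_rest : #(K₀ \ A) = 6 := by rw [card_sdiff, hA, hS.2.1 K₀ hK₀]
  rw [← card_rest]
  refine card_mul_eq_card_mul (fun K x => x ∈ K) (fun K hK => ?_) (fun x hx => ?_)
  · obtain ⟨-, hAK, hK4⟩ := mem_filter.1 hK
    have : (K₀ \ A).bipartiteAbove (fun K x => x ∈ K) K = (K ∩ K₀) \ (A ∩ K₀) := by
      ext x; simp only [bipartiteAbove, mem_filter, mem_sdiff, mem_inter]; tauto
    rw [this, card_sdiff_of_subset (inter_subset_inter_right hAK), hK4, hA]
  · obtain ⟨hxK₀, hxA⟩ := mem_sdiff.1 hx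
    rw [← hm (insert x A) (card_insert_of_notMem hxA), bipartiteBelow, filter_filter]
    refine congrArg card (filter_congr fun K hK => ⟨fun ⟨⟨hAK, _⟩, hxK⟩ => insert_subset hxK hAK,
      fun hxAK => ?_⟩)
    obtain ⟨hxK, hAK⟩ := insert_subset_iff.1 hxAK
    have three_le : 3 ≤ #(K ∩ K₀) := by
      calc 3 = #(insert x (A ∩ K₀)) := by rw [card_insert_of_notMem (by simp [hxA]), hA]
        _ ≤ #(K ∩ K₀) := card_le_card (insert_subset (mem_inter.2 ⟨hxK, hxK₀⟩)
          (inter_subset_inter_right hAK))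
    exact ⟨⟨hAK, hS.card_inter_eq_four_of_three_le hK hK₀ (by rintro rfl; exact hAK₀ hAK)
      three_le⟩, hxK⟩

end IsSteinerSystem_5_8_24

end

theorem point_of_K0_in_twelve_octads_general {Ω : Type*} [Fintype Ω] [DecidableEq Ω]
    (S : Finset (Finset Ω)) (hS : IsSteinerSystem_5_8_24 S)
    (pinf p0 p1 : Ω) (hinf1 : pinf ≠ p1)
    (K₀ : Finset Ω) (hK₀S : K₀ ∈ S)
    (h0K : p0 ∈ K₀) (hinfK : pinf ∉ K₀) (h1K : p1 ∉ K₀)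
    (F : Finset (Finset Ω))
    (hF : F = S.filter fun K => pinf ∈ K ∧ p0 ∈ K ∧ p1 ∉ K ∧ (K ∩ K₀).card = 4) :
    ∀ k ∈ K₀, k ≠ p0 →
      (F.filter fun K => k ∈ K).card = 12 := by
  intro k hk hk0
  have hpair : {p0, k} ⊆ K₀ := insert_subset h0K (singleton_subset_iff.2 hk)
  have hpair_card : #({p0, k} ∩ K₀) = 2 := by rw [inter_eq_left.2 hpair, card_pair hk0.symm]
  have hinf : pinf ∉ ({p0, k} : Finset Ω) := fun h => hinfK (hpair h)
  have h1 : p1 ∉ ({pinf, p0, k} : Finset Ω) := by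
    rw [mem_insert, not_or]
    exact ⟨hinf1.symm, fun h => h1K (hpair h)⟩
  have through_inf := hS.card_filter_superset_inter_eq_four_mul_two hK₀S (A := {pinf, p0, k})
    (fun h => hinfK (h (mem_insert_self _ _))) (by rw [insert_inter_of_notMem hinfK, hpair_card])
    fun _ hB => hS.card_filter_superset_of_card_eq_four
      (by rw [hB, card_insert_of_notMem hinf, card_pair hk0.symm])
  have through_inf_one :=
    hS.card_filter_superset_inter_eq_four_mul_two hK₀S (A := {p1, pinf, p0, k})
    (fun h => h1K (h (mem_insert_self _ _)))
    (by rw [insert_inter_of_notMem h1K, insert_inter_of_notMem hinfK, hpair_card])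
    fun _ hB => hS.card_filter_superset_of_card_eq_five
      (by rw [hB, card_insert_of_notMem h1, card_insert_of_notMem hinf, card_pair hk0.symm])
  have card_split := card_filter_add_card_filter_not
    (s := {K ∈ S | {pinf, p0, k} ⊆ K ∧ #(K ∩ K₀) = 4}) (p1 ∈ ·)
  rw [filter_filter, filter_filter] at card_split
  have through_p1 : {K ∈ S | ({pinf, p0, k} ⊆ K ∧ #(K ∩ K₀) = 4) ∧ p1 ∈ K}
      = {K ∈ S | {p1, pinf, p0, k} ⊆ K ∧ #(K ∩ K₀) = 4} :=
    filter_congr fun K _ => by rw [insert_subset_iff (a := p1)]; tauto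
  have avoiding_p1 : {K ∈ S | ({pinf, p0, k} ⊆ K ∧ #(K ∩ K₀) = 4) ∧ p1 ∉ K}
      = F.filter fun K => k ∈ K := by
    rw [hF, filter_filter]
    exact filter_congr fun K _ => by simp only [insert_subset_iff, singleton_subset_iff]; tauto
  rw [through_p1, avoiding_p1] at card_split
  omega

theorem point_of_K0_in_twelve_octads {Ω : Type*} [Fintype Ω] [DecidableEq Ω]
    (S : Finset (Finset Ω)) (hS : IsSteinerSystem_5_8_24 S)
    (pinf p0 p1 : Ω) (h01 : p0 ≠ p1) (hinf0 : pinf ≠ p0) (hinf1 : pinf ≠ p1)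
    (K₀ : Finset Ω) (hK₀S : K₀ ∈ S)
    (h0K : p0 ∈ K₀) (hinfK : pinf ∉ K₀) (h1K : p1 ∉ K₀)
    (F : Finset (Finset Ω))
    (hF : F = S.filter fun K => pinf ∈ K ∧ p0 ∈ K ∧ p1 ∉ K ∧ (K ∩ K₀).card = 4) :
    ∀ k ∈ K₀, k ≠ p0 →
      (F.filter fun K => k ∈ K).card = 12 :=
  point_of_K0_in_twelve_octads_general S hS pinf p0 p1 hinf1 K₀ hK₀S h0K hinfK h1K F hF
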